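/- arXiv:1608.04553 — 2 statements merged into one kernel-verified Lean document; each statement's English description precedes it below -/
import Mathlib

section
/- Let D : ℝ × ℝ² → ℝ be twice continuously differentiable in a neighborhood of (t, r) with ∇D(t,r) ≠ 0; set N := ∇D(t,r)/‖∇D(t,r)‖, T := R_{−π/2}N (so if N = (N₁,N₂) then T = (N₂,−N₁)), and λ := −D′_t(t,r)/‖∇D(t,r)‖. Then the map s ↦ ∇D(t+s, r + s·λ·N)/‖∇D(t+s, r + s·λ·N)‖ is differentiable at s = 0 with derivative equal to (⟨T, ∇D′_t(t,r) + λ·D″(t,r)N⟩/‖∇D(t,r)‖)·T. (Consequently the angular velocity of rotation of the isoline is ω = −⟨∇D′_t + λ·D″N, T⟩/‖∇D‖, and the unit normal along the moving isoline satisfies N(t+dt, r₊(dt)) = N − ω·T·dt + o(dt).) -/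
/-!
Along the line `s ↦ (t + s, r + s • v)` the chain rule differentiates `∇D` to `∇D′_t + D″v`;
the mixed second derivative appearing there is `∇D′_t` by symmetry of the second derivative
of `D` on `ℝ × ℝ²`. Differentiating the normalisation `g ↦ g / ‖g‖` then removes the
component of this vector along `N` and divides by `‖∇D‖`, which in the plane leaves
`⟨T, ∇D′_t + λ D″N⟩ / ‖∇D‖ • T` for the velocity `v = λN`.
-/

open Real Set
open scoped RealInnerProductSpace
noncomputable section

/-- The plane ℝ². -/
abbrev Plane := EuclideanSpace ℝ (Fin 2)

/-- Spatial gradient ∇D of the field. -/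
def sgrad (D : ℝ × Plane → ℝ) (t : ℝ) (r : Plane) : Plane :=
  gradient (fun p => D (t, p)) r

/-- Partial time derivative D′_t of the field. -/
def dT (D : ℝ × Plane → ℝ) (t : ℝ) (r : Plane) : ℝ :=
  deriv (fun s => D (s, r)) t

/-- Second partial time derivative D″_tt of the field. -/
def dTT (D : ℝ × Plane → ℝ) (t : ℝ) (r : Plane) : ℝ :=
  deriv (fun s => dT D s r) t

/-- Spatial gradient ∇D′_t of the partial time derivative. -/
def sgradDt (D : ℝ × Plane → ℝ) (t : ℝ) (r : Plane) : Plane :=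
  gradient (fun p => dT D t p) r

/-- Spatial Hessian D″ applied to a vector v. -/
def hess (D : ℝ × Plane → ℝ) (t : ℝ) (r : Plane) (v : Plane) : Plane :=
  fderiv ℝ (fun p => sgrad D t p) r v

/-- Clockwise rotation through π/2, i.e. R_{−π/2}. -/
def rotCW (v : Plane) : Plane := WithLp.toLp 2 ![v 1, -(v 0)]

/-- The unit normal N = ∇D/‖∇D‖ of the isoline. -/
def unitN (D : ℝ × Plane → ℝ) (t : ℝ) (r : Plane) : Plane :=
  ‖sgrad D t r‖⁻¹ • sgrad D t r

/-- The unit tangent T = R_{−π/2} N of the isoline. -/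
def unitT (D : ℝ × Plane → ℝ) (t : ℝ) (r : Plane) : Plane :=
  rotCW (unitN D t r)

/-- The density of isolines ρ = ‖∇D‖. -/
def rho (D : ℝ × Plane → ℝ) (t : ℝ) (r : Plane) : ℝ := ‖sgrad D t r‖

/-- The front velocity λ = −D′_t/‖∇D‖ of the isoline. -/
def lam (D : ℝ × Plane → ℝ) (t : ℝ) (r : Plane) : ℝ :=
  -(dT D t r) / ‖sgrad D t r‖

/-- The proportional growth rate v_ρ = ⟨∇D′_t + λD″N, N⟩/‖∇D‖ of the density ρ
    along the moving isoline. -/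
def vRho (D : ℝ × Plane → ℝ) (t : ℝ) (r : Plane) : ℝ :=
  ⟪sgradDt D t r + lam D t r • hess D t r (unitN D t r), unitN D t r⟫ / ‖sgrad D t r‖

/-- The angular velocity ω = −⟨∇D′_t + λD″N, T⟩/‖∇D‖ of rotation of the isoline. -/
def omg (D : ℝ × Plane → ℝ) (t : ℝ) (r : Plane) : ℝ :=
  -⟪sgradDt D t r + lam D t r • hess D t r (unitN D t r), unitT D t r⟫ / ‖sgrad D t r‖

/-- The front acceleration α of the isoline. -/
def alph (D : ℝ × Plane → ℝ) (t : ℝ) (r : Plane) : ℝ :=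
  -(dTT D t r + lam D t r * ⟪sgradDt D t r, unitN D t r⟫) / ‖sgrad D t r‖
    - lam D t r * vRho D t r

/-- The signed curvature κ = −⟨D″T, T⟩/‖∇D‖ of the isoline. -/
def kap (D : ℝ × Plane → ℝ) (t : ℝ) (r : Plane) : ℝ :=
  -⟪hess D t r (unitT D t r), unitT D t r⟫ / ‖sgrad D t r‖

/-- The proportional growth rate τ_ρ = ⟨D″N, T⟩/‖∇D‖ of the density ρ under
    tangential displacement. -/
def tauRho (D : ℝ × Plane → ℝ) (t : ℝ) (r : Plane) : ℝ :=
  ⟪hess D t r (unitN D t r), unitT D t r⟫ / ‖sgrad D t r‖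

/-- The proportional growth rate n_ρ = ⟨D″N, N⟩/‖∇D‖ of the density ρ under
    normal displacement. -/
def nRho (D : ℝ × Plane → ℝ) (t : ℝ) (r : Plane) : ℝ :=
  ⟪hess D t r (unitN D t r), unitN D t r⟫ / ‖sgrad D t r‖

/-- The angular velocity ω_∇ = −⟨∇D′_t, T⟩/‖∇D‖ of rotation of the gradient. -/
def omgGrad (D : ℝ × Plane → ℝ) (t : ℝ) (r : Plane) : ℝ :=
  -⟪sgradDt D t r, unitT D t r⟫ / ‖sgrad D t r‖

/-- The unit velocity-orientation vector e(θ) = (cos θ, sin θ). -/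
def eVec (θ : ℝ) : Plane := WithLp.toLp 2 ![Real.cos θ, Real.sin θ]

section Normalize

variable {E : Type*} [NormedAddCommGroup E] [InnerProductSpace ℝ E] {f : ℝ → E} {f' : E} {x : ℝ}

theorem HasDerivAt.norm (hf : HasDerivAt f f' x) (h0 : f x ≠ 0) :
    HasDerivAt (fun s => ‖f s‖) (⟪f x, f'⟫ / ‖f x‖) x := by
  have hsq : ‖f x‖ ^ 2 ≠ 0 := by positivity
  convert hf.norm_sq.sqrt hsq using 1
  · simp only [Real.sqrt_sq (norm_nonneg _)]
  · rw [Real.sqrt_sq (norm_nonneg _)]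
    ring

theorem HasDerivAt.inv_norm_smul (hf : HasDerivAt f f' x) (h0 : f x ≠ 0) :
    HasDerivAt (fun s => ‖f s‖⁻¹ • f s)
      (‖f x‖⁻¹ • (f' - ⟪‖f x‖⁻¹ • f x, f'⟫ • ‖f x‖⁻¹ • f x)) x := by
  have hn : ‖f x‖ ≠ 0 := norm_ne_zero_iff.2 h0
  refine (((hf.norm h0).inv hn).smul hf).congr_deriv ?_
  simp only [Pi.inv_apply, real_inner_smul_left]
  match_scalars <;> field_simp

end Normalize

section GradSnd

open ContinuousLinearMap

variable {E F : Type*} [NormedAddCommGroup E] [NormedSpace ℝ E]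
  [NormedAddCommGroup F] [InnerProductSpace ℝ F] [CompleteSpace F]

def gradSnd : ((E × F) →L[ℝ] ℝ) →L[ℝ] F where
  toFun L := (InnerProductSpace.toDual ℝ F).symm (L ∘L inr ℝ E F)
  map_add' _ _ := by simp [add_comp]
  map_smul' _ _ := by simp [smul_comp]
  cont := (InnerProductSpace.toDual ℝ F).symm.continuous.comp
    ((compL ℝ F (E × F) ℝ).flip (inr ℝ E F)).continuous

theorem inner_gradSnd (L : (E × F) →L[ℝ] ℝ) (w : F) : ⟪gradSnd L, w⟫ = L (0, w) := by
  simp [gradSnd, InnerProductSpace.toDual_symm_apply]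

theorem gradient_comp_prodMk_right {D : E × F → ℝ} {e : E} {p : F}
    (h : DifferentiableAt ℝ D (e, p)) :
    gradient (fun q => D (e, q)) p = gradSnd (fderiv ℝ D (e, p)) :=
  congrArg _ (h.hasFDerivAt.comp p (hasFDerivAt_prodMk_right e p)).fderiv

end GradSnd

theorem ContDiffAt.hasFDerivAt_fderiv {E F : Type*} [NormedAddCommGroup E] [NormedSpace ℝ E]
    [NormedAddCommGroup F] [NormedSpace ℝ F] {f : E → F} {x : E} (hf : ContDiffAt ℝ 2 f x) :
    HasFDerivAt (fderiv ℝ f) (fderiv ℝ (fderiv ℝ f) x) x :=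
  ((hf.fderiv_right (m := 1) le_rfl).differentiableAt one_ne_zero).hasFDerivAt

section IsolineField

open Filter Topology ContinuousLinearMap

variable {D : ℝ × Plane → ℝ} {t : ℝ} {r : Plane}

theorem dT_eq_fderiv_apply {p : Plane} (h : DifferentiableAt ℝ D (t, p)) :
    dT D t p = fderiv ℝ D (t, p) (1, 0) := by
  have hline : HasDerivAt (fun s : ℝ => (s, p)) ((1 : ℝ), (0 : Plane)) t :=
    (hasDerivAt_id t).prodMk (hasDerivAt_const t p)
  exact (h.hasFDerivAt.comp_hasDerivAt t hline).deriv

theorem hess_smul (c : ℝ) (v : Plane) : hess D t r (c • v) = c • hess D t r v :=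
  map_smul _ c v

theorem hasFDerivAt_sgrad (hD : ContDiffAt ℝ 2 D (t, r)) :
    HasFDerivAt (fun q : ℝ × Plane => sgrad D q.1 q.2)
      (gradSnd ∘L fderiv ℝ (fderiv ℝ D) (t, r)) (t, r) := by
  refine (gradSnd.hasFDerivAt.comp (t, r) hD.hasFDerivAt_fderiv).congr_of_eventuallyEq ?_
  filter_upwards [hD.eventually (by simp)] with q hq
  exact gradient_comp_prodMk_right (hq.differentiableAt (by norm_num))

theorem hess_eq_gradSnd (hD : ContDiffAt ℝ 2 D (t, r)) (w : Plane) :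
    hess D t r w = gradSnd (fderiv ℝ (fderiv ℝ D) (t, r) (0, w)) :=
  congrArg (· w) ((hasFDerivAt_sgrad hD).comp r (hasFDerivAt_prodMk_right t r)).fderiv

theorem inner_sgradDt (hD : ContDiffAt ℝ 2 D (t, r)) (w : Plane) :
    ⟪sgradDt D t r, w⟫ = fderiv ℝ (fderiv ℝ D) (t, r) (0, w) (1, 0) := by
  have hslice : (fun p => dT D t p) =ᶠ[𝓝 r] fun p => fderiv ℝ D (t, p) (1, 0) :=
    ((Continuous.prodMk_right t).tendsto r).eventually <| (hD.eventually (by simp)).mono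
      fun _ hq => dT_eq_fderiv_apply (hq.differentiableAt (by norm_num))
  have hderiv := ((apply ℝ ℝ ((1 : ℝ), (0 : Plane))).hasFDerivAt.comp r
    (hD.hasFDerivAt_fderiv.comp r (hasFDerivAt_prodMk_right t r))).congr_of_eventuallyEq hslice
  rw [sgradDt, gradient, hderiv.fderiv, InnerProductSpace.toDual_symm_apply]
  rfl

theorem gradSnd_fderiv_fderiv_apply (hD : ContDiffAt ℝ 2 D (t, r)) (v : Plane) :
    gradSnd (fderiv ℝ (fderiv ℝ D) (t, r) (1, v)) = sgradDt D t r + hess D t r v := by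
  refine ext_inner_right ℝ fun w => ?_
  have hsplit : ((1 : ℝ), v) = ((1 : ℝ), (0 : Plane)) + ((0 : ℝ), v) := by simp
  rw [inner_gradSnd, hsplit, map_add, add_apply, inner_add_left, inner_sgradDt hD,
    hess_eq_gradSnd hD, inner_gradSnd, hD.isSymmSndFDerivAt (by simp) (0, w) (1, 0)]

theorem hasDerivAt_sgrad_line (hD : ContDiffAt ℝ 2 D (t, r)) (v : Plane) :
    HasDerivAt (fun s => sgrad D (t + s) (r + s • v)) (sgradDt D t r + hess D t r v) 0 := by
  have hline : HasDerivAt (fun s : ℝ => (t + s, r + s • v)) ((1 : ℝ), v) 0 := by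
    simpa using ((hasDerivAt_id (0 : ℝ)).const_add t).prodMk
      (((hasDerivAt_id (0 : ℝ)).smul_const v).const_add r)
  rw [← gradSnd_fderiv_fderiv_apply hD]
  exact (hasFDerivAt_sgrad hD).comp_hasDerivAt_of_eq 0 hline (by simp)

end IsolineField

theorem sub_inner_smul_eq_inner_rotCW_smul {u : Plane} (hu : ‖u‖ = 1) (v : Plane) :
    v - ⟪u, v⟫ • u = ⟪rotCW u, v⟫ • rotCW u := by
  have hu2 : u 0 * u 0 + u 1 * u 1 = 1 := by
    simpa [EuclideanSpace.norm_eq, Fin.sum_univ_two, ← sq] using hu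
  ext i
  fin_cases i <;>
    simp only [PiLp.inner_apply, RCLike.inner_apply, ringHom_apply, Fin.sum_univ_two, Fin.isValue,
      Fin.zero_eta, Fin.mk_one, PiLp.sub_apply, PiLp.smul_apply, smul_eq_mul, rotCW,
      Matrix.cons_val_zero, Matrix.cons_val_one, Matrix.cons_val_fin_one, mul_neg]
  · linear_combination -(v 0) * hu2
  · linear_combination -(v 1) * hu2

/-- along the moving isoline the unit normal `N = ∇D/‖∇D‖` has derivative
`(⟨T, ∇D′_t + λ·D″N⟩/‖∇D‖)·T` at `s = 0`; consequently the angular velocity of the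
isoline is `ω = −⟨∇D′_t + λ·D″N, T⟩/‖∇D‖` and `N(t+dt, r₊(dt)) = N − ω·T·dt + o(dt)`. -/
theorem normal_rotation_along_moving_isoline
    (D : ℝ × Plane → ℝ) (t : ℝ) (r : Plane)
    (hD : ContDiffAt ℝ 2 D (t, r)) (hgrad : sgrad D t r ≠ 0) :
    HasDerivAt (fun s => unitN D (t + s) (r + (s * lam D t r) • unitN D t r))
      ((⟪unitT D t r, sgradDt D t r + lam D t r • hess D t r (unitN D t r)⟫
          / ‖sgrad D t r‖) • unitT D t r) 0 ∧
    (⟪unitT D t r, sgradDt D t r + lam D t r • hess D t r (unitN D t r)⟫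
        / ‖sgrad D t r‖) • unitT D t r
      = -(omg D t r) • unitT D t r := by
  have hN : ‖unitN D t r‖ = 1 := norm_smul_inv_norm hgrad
  have hmove := (hasDerivAt_sgrad_line hD (lam D t r • unitN D t r)).inv_norm_smul
    (by simpa using hgrad)
  simp only [add_zero, zero_smul, ← unitN.eq_1, hess_smul] at hmove
  refine ⟨?_, by rw [omg, real_inner_comm, neg_div, neg_neg]⟩
  simp only [mul_smul]
  refine hmove.congr_deriv ?_
  rw [sub_inner_smul_eq_inner_rotCW_smul hN, ← unitT.eq_1, smul_smul, div_eq_inv_mul]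
end
end

section
/- Let D : ℝ × ℝ² → ℝ be twice continuously differentiable in a neighborhood of (t, r) with ∇D(t,r) ≠ 0; set N := ∇D(t,r)/‖∇D(t,r)‖, T := R_{−π/2}N, λ := −D′_t(t,r)/‖∇D(t,r)‖, and ω := −⟨∇D′_t(t,r) + λ·D″(t,r)N, T⟩/‖∇D(t,r)‖. Then the function s ↦ −D′_t(t, r + s·T)/‖∇D(t, r + s·T)‖ is differentiable at s = 0 with derivative ω; in other words, the front velocity satisfies λ(t, r + T·ds) = λ + ω·ds + o(ds). -/
open Real Set
open scoped RealInnerProductSpace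
noncomputable section

/-! Along the line `s ↦ r + s • T` the front velocity is the quotient `-D′_t / ‖∇D‖`. Its
numerator has derivative `⟪∇D′_t, T⟫` and `∇D` has derivative `D″T`, so `‖∇D‖` has derivative
`⟪D″T, N⟫`, and the quotient rule gives `-(⟪∇D′_t, T⟫ + λ ⟪D″T, N⟫) / ‖∇D‖`. This is `ω` because
the Hessian of a `C²` function is symmetric: `⟪D″T, N⟫ = ⟪D″N, T⟫`. -/

open Topology

section Gradient

variable {E : Type*} [NormedAddCommGroup E] [InnerProductSpace ℝ E] [CompleteSpace E]
  {f : E → ℝ} {x : E}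

theorem ContDiffAt.differentiableAt_gradient (hf : ContDiffAt ℝ 2 f x) :
    DifferentiableAt ℝ (gradient f) x :=
  ((InnerProductSpace.toDual ℝ E).symm.hasFDerivAt.comp x
    ((hf.fderiv_right (m := 1) le_rfl).differentiableAt one_ne_zero).hasFDerivAt).differentiableAt

theorem inner_fderiv_gradient_apply (hf : DifferentiableAt ℝ (fderiv ℝ f) x) (v w : E) :
    ⟪fderiv ℝ (gradient f) x v, w⟫ = fderiv ℝ (fderiv ℝ f) x v w := by
  have := ((InnerProductSpace.toDual ℝ E).symm.hasFDerivAt.comp x hf.hasFDerivAt).fderiv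
  rw [show gradient f = (InnerProductSpace.toDual ℝ E).symm ∘ fderiv ℝ f from rfl, this]
  exact InnerProductSpace.toDual_symm_apply

theorem ContDiffAt.inner_fderiv_gradient_comm (hf : ContDiffAt ℝ 2 f x) (v w : E) :
    ⟪fderiv ℝ (gradient f) x v, w⟫ = ⟪fderiv ℝ (gradient f) x w, v⟫ := by
  have hf' := (hf.fderiv_right (m := 1) le_rfl).differentiableAt one_ne_zero
  rw [inner_fderiv_gradient_apply hf', inner_fderiv_gradient_apply hf']
  exact hf.isSymmSndFDerivAt (by simp) v w

end Gradient

section NormQuotient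

variable {F : Type*} [NormedAddCommGroup F] [InnerProductSpace ℝ F]

theorem HasDerivAt.norm_s9 {V : ℝ → F} {V' : F} {s : ℝ} (hV : HasDerivAt V V' s) (h0 : V s ≠ 0) :
    HasDerivAt (fun u => ‖V u‖) (⟪V s, V'⟫ / ‖V s‖) s := by
  convert hV.norm_sq.sqrt (pow_ne_zero 2 (norm_ne_zero_iff.mpr h0)) using 1
  · simp [Real.sqrt_sq (norm_nonneg _)]
  · rw [Real.sqrt_sq (norm_nonneg _)]; field_simp

theorem HasDerivAt.neg_div_norm {a : ℝ → ℝ} {V : ℝ → F} {a' : ℝ} {V' : F} {s : ℝ}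
    (ha : HasDerivAt a a' s) (hV : HasDerivAt V V' s) (h0 : V s ≠ 0) :
    HasDerivAt (fun u => -a u / ‖V u‖)
      (-(a' + (-a s / ‖V s‖) * ⟪V', ‖V s‖⁻¹ • V s⟫) / ‖V s‖) s := by
  have hn : ‖V s‖ ≠ 0 := norm_ne_zero_iff.mpr h0
  refine (ha.neg.div (hV.norm_s9 h0) hn).congr_deriv ?_
  rw [real_inner_smul_right, real_inner_comm, Pi.neg_apply]
  field_simp
  ring

end NormQuotient

section PartialDeriv

variable {E F : Type*} [NormedAddCommGroup E] [NormedSpace ℝ E] [NormedAddCommGroup F]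
  [NormedSpace ℝ F] {f : ℝ × E → F} {t : ℝ} {x : E}

theorem ContDiffAt.differentiableAt_deriv_fst (hf : ContDiffAt ℝ 2 f (t, x)) :
    DifferentiableAt ℝ (fun y => deriv (fun s => f (s, y)) t) x := by
  have hdiff : ∀ᶠ y in 𝓝 x, DifferentiableAt ℝ f (t, y) :=
    (continuous_const.prodMk continuous_id).continuousAt.eventually ((hf.eventually (by simp)).mono
      fun _ h => h.differentiableAt two_ne_zero)
  have hpartial : (fun y => deriv (fun s => f (s, y)) t) =ᶠ[𝓝 x]
      fun y => fderiv ℝ f (t, y) (1, 0) := by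
    filter_upwards [hdiff] with y hy
    exact (hy.hasFDerivAt.comp_hasDerivAt t ((hasDerivAt_id t).prodMk
      (hasDerivAt_const t y))).deriv
  refine DifferentiableAt.congr_of_eventuallyEq ?_ hpartial
  have hfd := (hf.fderiv_right (m := 1) le_rfl).differentiableAt one_ne_zero
  exact (hfd.comp x (by fun_prop)).clm_apply (differentiableAt_const _)

end PartialDeriv

theorem omg_eq (D : ℝ × Plane → ℝ) (t : ℝ) (r : Plane) (hD : ContDiffAt ℝ 2 D (t, r)) :
    omg D t r = -(⟪sgradDt D t r, unitT D t r⟫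
      + lam D t r * ⟪hess D t r (unitT D t r), unitN D t r⟫) / ‖sgrad D t r‖ := by
  have hsymm : ⟪hess D t r (unitN D t r), unitT D t r⟫ = ⟪hess D t r (unitT D t r), unitN D t r⟫ :=
    (hD.comp r (contDiffAt_const.prodMk contDiffAt_id)).inner_fderiv_gradient_comm _ _
  rw [omg, inner_add_left, real_inner_smul_left, hsymm]

/-- under tangential displacement the front velocity satisfies
`λ(t, r + T·ds) = λ + ω·ds + o(ds)`, i.e. `s ↦ λ(t, r + s·T)` has derivative
`ω = −⟨∇D′_t + λ·D″N, T⟩/‖∇D‖` at `s = 0`. -/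
theorem front_velocity_tangential_growth
    (D : ℝ × Plane → ℝ) (t : ℝ) (r : Plane)
    (hD : ContDiffAt ℝ 2 D (t, r)) (hgrad : sgrad D t r ≠ 0) :
    HasDerivAt (fun s : ℝ => lam D t (r + s • unitT D t r)) (omg D t r) 0 := by
  have hslice : ContDiffAt ℝ 2 (fun p => D (t, p)) r :=
    hD.comp r (contDiffAt_const.prodMk contDiffAt_id)
  have hdT : HasLineDerivAt ℝ (dT D t) ⟪sgradDt D t r, unitT D t r⟫ r (unitT D t r) :=
    hD.differentiableAt_deriv_fst.hasGradientAt.hasFDerivAt.hasLineDerivAt _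
  have hsgrad : HasLineDerivAt ℝ (sgrad D t) (hess D t r (unitT D t r)) r (unitT D t r) :=
    hslice.differentiableAt_gradient.hasFDerivAt.hasLineDerivAt _
  have hlam := hdT.neg_div_norm hsgrad (by simpa using hgrad)
  simp only [zero_smul, add_zero] at hlam
  rw [omg_eq D t r hD]
  exact hlam
end
end
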